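/- arXiv:1612.04761 — 2 statements merged into one kernel-verified Lean document; each statement's English description precedes it below -/
import Mathlib

section
/- Let (M_k) be a real-valued submartingale with respect to a filtration (F_k) with M_0 = 0, such that E[(M_{k+1}-M_k)^2 | F_k] ≥ δ for some δ > 0, and |M_{k+1}-M_k| ≤ m almost surely for some m < ∞. Then there exist constants C, m_0, γ > 0, depending only on δ and m, such that for every n ≥ 1 and every y ≥ m_0, P(max_{k ≤ n} |M_k| ≤ y) ≤ C·exp(−γ·n/y²). -/
open MeasureTheory Real

/-!
Let `T k` be the event that `|M j| ≤ y` for all `j ≤ k`, `p k = P(T k)` and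
`a k = E[(M k + y)²; T k]`. On `T k` we have `M k + y ≥ 0`, so the nonnegative drift and the
conditional variance bound give `E[(M (k+1) + y)² | 𝓕 k] ≥ (M k + y)² + δ` there, while on the exit
event `T k \ T (k+1)` the bounded increments give `(M (k+1) + y)² ≤ H := (2y + m)²`. Hence the
potential `a k - H p k` lies in `[-H p k, 0]` and grows by at least `δ p k` per step, so `p` halves
within every `L ≈ 2H/δ = O(y²)` steps, and `p n ≤ 2 · 2^(-n/L)`.
-/

lemma mul_le_of_potential_step {a p : ℕ → ℝ} {H δ : ℝ} (hp : Antitone p) (hδ : 0 ≤ δ)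
    (ha : ∀ k, 0 ≤ a k) (haH : ∀ k, a k ≤ H * p k)
    (hstep : ∀ k, a k + δ * p k ≤ a (k + 1) + H * (p k - p (k + 1))) (s L : ℕ) :
    δ * L * p (s + L) ≤ H * p s := by
  have hpotential : a s - H * p s + δ * L * p (s + L) ≤ a (s + L) - H * p (s + L) := by
    induction L with
    | zero => simp
    | succ L ih =>
      have hmono : δ * (L + 1) * p (s + L + 1) ≤ δ * (L + 1) * p (s + L) :=
        mul_le_mul_of_nonneg_left (hp (s + L).le_succ) (by positivity)
      rw [← add_assoc]
      push_cast
      linarith [hstep (s + L)]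
  linarith [ha s, haH (s + L)]

lemma le_two_mul_exp_of_le_half {p : ℕ → ℝ} {L : ℕ} (hp : Antitone p)
    (hp0 : p 0 ≤ 1) (hhalf : ∀ s, p (s + L) ≤ p s / 2) (n : ℕ) :
    p n ≤ 2 * exp (-log 2 * n / L) := by
  have hiter : ∀ j, p (j * L) ≤ (1 / 2) ^ j := by
    intro j
    induction j with
    | zero => simpa using hp0
    | succ j ih => rw [Nat.succ_mul, pow_succ]; linarith [hhalf (j * L)]
  have hdiv : (n : ℝ) / L < (n / L : ℕ) + 1 := by
    rw [← Nat.floor_div_eq_div (K := ℝ)]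
    exact Nat.lt_floor_add_one _
  calc p n ≤ (1 / 2) ^ (n / L) := (hp (Nat.div_mul_le_self n L)).trans (hiter _)
    _ = exp (log 2 * (1 - ((n / L : ℕ) + 1))) := by
      rw [show (1 / 2 : ℝ) = exp (-log 2) by rw [exp_neg, exp_log two_pos, one_div],
        ← exp_nat_mul]
      ring_nf
    _ ≤ exp (log 2 * (1 - n / L)) := by
      gcongr
    _ = 2 * exp (-log 2 * n / L) := by
      rw [mul_sub, mul_one, sub_eq_add_neg, exp_add, exp_log two_pos]
      ring_nf

namespace MeasureTheory

variable {Ω : Type*} {m : MeasurableSpace Ω} {μ : Measure Ω}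

lemma setIntegral_le_setIntegral_add_mul_measureReal_sdiff [IsFiniteMeasure μ] {f : Ω → ℝ}
    {s t : Set Ω} {H : ℝ} (hst : s ⊆ t) (hs : MeasurableSet s) (ht : MeasurableSet t)
    (hf : IntegrableOn f t μ) (hfH : ∀ᵐ ω ∂μ, ω ∈ t \ s → f ω ≤ H) :
    ∫ ω in t, f ω ∂μ ≤ ∫ ω in s, f ω ∂μ + H * (μ.real t - μ.real s) := by
  have hsplit : ∫ ω in t, f ω ∂μ = ∫ ω in s, f ω ∂μ + ∫ ω in t \ s, f ω ∂μ := by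
    rw [← setIntegral_union Set.disjoint_sdiff_right (ht.diff hs) (hf.mono_set hst)
      (hf.mono_set Set.sdiff_subset), Set.union_sdiff_cancel hst]
  have hdiff : ∫ ω in t \ s, f ω ∂μ ≤ ∫ _ in t \ s, H ∂μ :=
    setIntegral_mono_on_ae (hf.mono_set Set.sdiff_subset) (integrable_const H).integrableOn
      (ht.diff hs) hfH
  rw [setIntegral_const, measureReal_sdiff hst hs, smul_eq_mul] at hdiff
  linarith

variable {𝓕 : Filtration ℕ m} {M : ℕ → Ω → ℝ}

lemma ae_abs_le_mul_of_abs_sub_le {mb : ℝ} (h0 : ∀ᵐ ω ∂μ, M 0 ω = 0)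
    (hbdd : ∀ k, ∀ᵐ ω ∂μ, |M (k + 1) ω - M k ω| ≤ mb) (k : ℕ) :
    ∀ᵐ ω ∂μ, |M k ω| ≤ k * mb := by
  induction k with
  | zero => filter_upwards [h0] with ω hω; simp [hω]
  | succ k ih =>
    filter_upwards [ih, hbdd k] with ω hk hinc
    have := abs_sub_abs_le_abs_sub (M (k + 1) ω) (M k ω)
    push_cast
    linarith

lemma Submartingale.sq_add_add_le_condExp_sq_add [IsFiniteMeasure μ] {δ c : ℝ} {k : ℕ}
    (hsub : Submartingale M 𝓕 μ) (hk : MemLp (M k) 2 μ) (hk1 : MemLp (M (k + 1)) 2 μ)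
    (hvar : ∀ᵐ ω ∂μ, δ ≤ μ[fun ω' => (M (k + 1) ω' - M k ω') ^ 2 | 𝓕 k] ω) :
    ∀ᵐ ω ∂μ, 0 ≤ M k ω + c →
      (M k ω + c) ^ 2 + δ ≤ μ[fun ω' => (M (k + 1) ω' + c) ^ 2 | 𝓕 k] ω := by
  set X : Ω → ℝ := fun ω => M k ω + c
  set D : Ω → ℝ := M (k + 1) - M k
  have hX : MemLp X 2 μ := hk.add (memLp_const c)
  have hD : MemLp D 2 μ := hk1.sub hk
  have hXm : StronglyMeasurable[𝓕 k] X := (hsub.stronglyMeasurable k).add stronglyMeasurable_const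
  have hX2 : Integrable (fun ω => X ω ^ 2) μ := hX.integrable_sq
  have hD2 : Integrable (fun ω => D ω ^ 2) μ := hD.integrable_sq
  have hXD : Integrable ((fun ω => 2 * X ω) * D) μ := (hX.const_mul 2).integrable_mul hD
  have hdecomp : (fun ω => (M (k + 1) ω + c) ^ 2) =
      (fun ω => X ω ^ 2) + ((fun ω => 2 * X ω) * D + fun ω => D ω ^ 2) := by
    ext ω; simp only [X, D, Pi.add_apply, Pi.mul_apply, Pi.sub_apply]; ring
  have hX2_eq : μ[fun ω => X ω ^ 2 | 𝓕 k] = fun ω => X ω ^ 2 :=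
    condExp_of_stronglyMeasurable (𝓕.le k) (hXm.pow 2) hX2
  filter_upwards [condExp_add hX2 (hXD.add hD2) (𝓕 k), condExp_add hXD hD2 (𝓕 k),
    condExp_mul_of_stronglyMeasurable_left (hXm.const_mul 2) hXD (hD.integrable one_le_two),
    hsub.condExp_sub_nonneg k.le_succ, hvar] with ω hsplit hsplit' hpull hdrift hω hXnn
  have hdrift' : 0 ≤ μ[D | 𝓕 k] ω := hdrift
  have hvar' : δ ≤ μ[fun ω => D ω ^ 2 | 𝓕 k] ω := hω
  have hcross : 0 ≤ 2 * X ω * μ[D | 𝓕 k] ω := mul_nonneg (mul_nonneg zero_le_two hXnn) hdrift'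
  show X ω ^ 2 + δ ≤ _
  rw [hdecomp, hsplit, Pi.add_apply, hsplit', Pi.add_apply, hpull, hX2_eq, Pi.mul_apply]
  linarith

lemma Submartingale.setIntegral_sq_add_add_mul_measureReal_le [IsFiniteMeasure μ] {δ c : ℝ}
    {k : ℕ} {s : Set Ω}
    (hsub : Submartingale M 𝓕 μ) (hk : MemLp (M k) 2 μ) (hk1 : MemLp (M (k + 1)) 2 μ)
    (hvar : ∀ᵐ ω ∂μ, δ ≤ μ[fun ω' => (M (k + 1) ω' - M k ω') ^ 2 | 𝓕 k] ω)
    (hs : MeasurableSet[𝓕 k] s) (hpos : ∀ ω ∈ s, 0 ≤ M k ω + c) :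
    ∫ ω in s, (M k ω + c) ^ 2 ∂μ + δ * μ.real s ≤ ∫ ω in s, (M (k + 1) ω + c) ^ 2 ∂μ := by
  have hX2 : Integrable (fun ω => (M k ω + c) ^ 2) μ := (hk.add (memLp_const c)).integrable_sq
  calc ∫ ω in s, (M k ω + c) ^ 2 ∂μ + δ * μ.real s = ∫ ω in s, ((M k ω + c) ^ 2 + δ) ∂μ := by
        rw [integral_add hX2.integrableOn (integrable_const δ).integrableOn, setIntegral_const,
          smul_eq_mul, mul_comm]
    _ ≤ ∫ ω in s, μ[fun ω' => (M (k + 1) ω' + c) ^ 2 | 𝓕 k] ω ∂μ := by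
      refine setIntegral_mono_on_ae (hX2.add (integrable_const δ)).integrableOn
        integrable_condExp.integrableOn (𝓕.le k _ hs) ?_
      filter_upwards [hsub.sq_add_add_le_condExp_sq_add hk hk1 hvar] with ω hω hωs
      exact hω (hpos ω hωs)
    _ = ∫ ω in s, (M (k + 1) ω + c) ^ 2 ∂μ :=
      setIntegral_condExp (𝓕.le k) (hk1.add (memLp_const c)).integrable_sq hs

def stayWithin (M : ℕ → Ω → ℝ) (y : ℝ) (k : ℕ) : Set Ω := {ω | ∀ j ≤ k, |M j ω| ≤ y}

lemma stayWithin_anti (M : ℕ → Ω → ℝ) (y : ℝ) : Antitone (stayWithin M y) :=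
  fun _ _ hjk _ hω j hj => hω j (hj.trans hjk)

lemma measurableSet_stayWithin (hM : StronglyAdapted 𝓕 M) (y : ℝ) (k : ℕ) :
    MeasurableSet[𝓕 k] (stayWithin M y k) := by
  have : stayWithin M y k = ⋂ j ∈ Set.Iic k, M j ⁻¹' Set.Icc (-y) y := by
    ext ω; simp [stayWithin, abs_le]
  rw [this]
  exact .biInter (Set.to_countable _) fun j hj =>
    ((hM j).mono (𝓕.mono hj)).measurable measurableSet_Icc

lemma Submartingale.mul_measureReal_stayWithin_le [IsFiniteMeasure μ] {δ mb y : ℝ} (hδ : 0 ≤ δ)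
    (hmb : 0 ≤ mb) (hy : 0 ≤ y) (hsub : Submartingale M 𝓕 μ) (hL2 : ∀ k, MemLp (M k) 2 μ)
    (hvar : ∀ k, ∀ᵐ ω ∂μ, δ ≤ μ[fun ω' => (M (k + 1) ω' - M k ω') ^ 2 | 𝓕 k] ω)
    (hbdd : ∀ k, ∀ᵐ ω ∂μ, |M (k + 1) ω - M k ω| ≤ mb) (s L : ℕ) :
    δ * L * μ.real (stayWithin M y (s + L)) ≤ (2 * y + mb) ^ 2 * μ.real (stayWithin M y s) := by
  set T := stayWithin M y
  have hT : ∀ k, MeasurableSet (T k) := fun k =>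
    𝓕.le k _ (measurableSet_stayWithin hsub.stronglyAdapted y k)
  have hbound : ∀ {j k ω}, |M j ω| ≤ y → |M k ω - M j ω| ≤ mb →
      (M k ω + y) ^ 2 ≤ (2 * y + mb) ^ 2 := by
    intro j k ω hj hjk
    rw [abs_le] at hj hjk
    exact sq_le_sq' (by linarith) (by linarith)
  refine mul_le_of_potential_step (a := fun k => ∫ ω in T k, (M k ω + y) ^ 2 ∂μ)
    (fun _ _ h => measureReal_mono (stayWithin_anti M y h)) hδ
    (fun k => setIntegral_nonneg (hT k) fun _ _ => sq_nonneg _) (fun k => ?_) (fun k => ?_) s L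
  · calc ∫ ω in T k, (M k ω + y) ^ 2 ∂μ ≤ ∫ _ in T k, (2 * y + mb) ^ 2 ∂μ :=
          setIntegral_mono_on ((hL2 k).add (memLp_const y)).integrable_sq.integrableOn
            (integrable_const _).integrableOn (hT k)
            fun ω hω => hbound (hω k le_rfl) (by simpa using hmb)
      _ = (2 * y + mb) ^ 2 * μ.real (T k) := by rw [setIntegral_const, smul_eq_mul, mul_comm]
  · refine (hsub.setIntegral_sq_add_add_mul_measureReal_le (hL2 k) (hL2 (k + 1)) (hvar k)
      (measurableSet_stayWithin hsub.stronglyAdapted y k)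
      fun ω hω => by linarith [(abs_le.1 (hω k le_rfl)).1]).trans ?_
    refine setIntegral_le_setIntegral_add_mul_measureReal_sdiff (stayWithin_anti M y k.le_succ)
      (hT _) (hT _) ((hL2 (k + 1)).add (memLp_const y)).integrable_sq.integrableOn ?_
    filter_upwards [hbdd k] with ω hω hωT
    exact hbound (hωT.1 k le_rfl) hω

end MeasureTheory

theorem stmt0 {Ω : Type*} {m : MeasurableSpace Ω} {μ : Measure Ω} [IsProbabilityMeasure μ]
    (𝓕 : Filtration ℕ m) (M : ℕ → Ω → ℝ) (δ mb : ℝ) (hδ : 0 < δ)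
    (hsub : Submartingale M 𝓕 μ) (h0 : ∀ ω, M 0 ω = 0)
    (hvar : ∀ k, ∀ᵐ ω ∂μ, δ ≤ (μ[fun ω' => (M (k + 1) ω' - M k ω') ^ 2 | 𝓕 k]) ω)
    (hbdd : ∀ k, ∀ᵐ ω ∂μ, |M (k + 1) ω - M k ω| ≤ mb) :
    ∃ C m0 γ : ℝ, 0 < C ∧ 0 < m0 ∧ 0 < γ ∧ ∀ n : ℕ, 1 ≤ n → ∀ y : ℝ, m0 ≤ y →
      μ {ω | ∀ k ≤ n, |M k ω| ≤ y} ≤ ENNReal.ofReal (C * Real.exp (-γ * n / y ^ 2)) := by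
  have hmb : 0 ≤ mb := (abs_nonneg _).trans (hbdd 0).exists.choose_spec
  have hL2 : ∀ k, MemLp (M k) 2 μ := fun k =>
    .of_bound ((hsub.stronglyMeasurable k).mono (𝓕.le k)).aestronglyMeasurable _
      (by simpa using ae_abs_le_mul_of_abs_sub_le (ae_of_all _ h0) hbdd k)
  -- `y ≥ max 1 mb` gives `(2y + mb)² ≤ 9y²`, so the halving time is at most `(18/δ + 1) y²`.
  refine ⟨2, max 1 mb, log 2 / (18 / δ + 1), two_pos, by positivity, by positivity,
    fun n _ y hy => ?_⟩
  have hy1 : 1 ≤ y := le_of_max_le_left hy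
  have hmby : mb ≤ y := le_of_max_le_right hy
  set p := fun k => μ.real (stayWithin M y k)
  set H := (2 * y + mb) ^ 2
  set L := ⌈2 * H / δ⌉₊
  have hhalf : ∀ s, p (s + L) ≤ p s / 2 := fun s => by
    have hδL : 2 * H ≤ δ * L := (div_le_iff₀' hδ).1 (Nat.le_ceil _)
    have hdecay := hsub.mul_measureReal_stayWithin_le hδ.le hmb (by linarith) hL2 hvar hbdd s L
    have hp : 0 ≤ p (s + L) := measureReal_nonneg
    have : H * (2 * p (s + L)) ≤ H * p s := by nlinarith
    linarith [le_of_mul_le_mul_left this (by positivity)]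
  have hLy : (L : ℝ) ≤ (18 / δ + 1) * y ^ 2 := by
    have hceil := Nat.ceil_lt_add_one (show 0 ≤ 2 * H / δ by positivity)
    have hH : 2 * H ≤ 18 * y ^ 2 := by nlinarith
    have : 2 * H / δ ≤ 18 * y ^ 2 / δ := div_le_div_of_nonneg_right hH hδ.le
    have : 1 ≤ y ^ 2 := by nlinarith
    rw [add_mul, div_mul_eq_mul_div, one_mul]
    linarith
  rw [← ofReal_measureReal]
  refine ENNReal.ofReal_le_ofReal ((le_two_mul_exp_of_le_half
    (fun _ _ h => measureReal_mono (stayWithin_anti M y h)) measureReal_le_one hhalf n).trans ?_)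
  rw [neg_mul, neg_div, neg_mul, neg_div, div_mul_eq_mul_div, div_div]
  gcongr
end

section
/- Let (M_k) be a submartingale with M_0 = 0, increments bounded by m, and conditional variance of increments at least δ > 0. Fix 1/2 < a < π/4 and ε > 0 such that g(u) = cos(π/4 + u) satisfies g'(u) ≤ 0 and g(u) ≥ ε on [−a,a]. Set γ = δ/16. Then there exists y_0 > 0 (depending on m, δ, ε) such that for all y ≥ y_0 and all k with |M_k/(2y)| ≤ a, E[g(M_{k+1}/(2y)) | F_k] ≤ exp(−γ/y²)·g(M_k/(2y)). -/
open MeasureTheory Real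

/-!
Put `θ = π/4 + M_k/(2y)` and `h = (M_{k+1} - M_k)/(2y)`, so `|h| ≤ r := m/(2y)`. Expanding
`cos (θ + h) = cos θ cos h - sin θ sin h` and using `cos h ≤ 1 - 3h²/8`, `sin h ≥ h - r h²/6`,
`E[h | F_k] ≥ 0` and `cos θ, sin θ ≥ 0` gives
`E[cos (θ + h) | F_k] ≤ cos θ - (3/8 cos θ - r/6 sin θ) E[h² | F_k]`.
For `y` large, `r ≤ ε/2 ≤ cos θ / 2`, so the bracket is at least `cos θ / 4`, while
`E[h² | F_k] ≥ δ/(4y²)`; hence the bound `(1 - δ/(16y²)) cos θ ≤ exp(-δ/(16y²)) cos θ`.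
-/

namespace Real

lemma cos_le_one_sub_mul_sq_of_abs_le_one {x : ℝ} (hx : |x| ≤ 1) :
    cos x ≤ 1 - 3 / 8 * x ^ 2 := by
  have htaylor := (abs_le.1 (cos_bound hx)).2
  have hx4 : |x| ^ 4 = x ^ 2 * x ^ 2 := by rw [show |x| ^ 4 = (|x| ^ 2) ^ 2 by ring, sq_abs]; ring
  have hx2 : x ^ 2 ≤ 1 := by nlinarith [sq_abs x, abs_nonneg x]
  nlinarith [sq_nonneg x]

lemma sub_mul_sq_le_sin {x r : ℝ} (hx : |x| ≤ r) : x - r / 6 * x ^ 2 ≤ sin x := by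
  rcases le_or_gt 0 x with hx0 | hx0
  · have hcube : x ^ 3 ≤ r * x ^ 2 := by
      rw [pow_succ']
      exact mul_le_mul_of_nonneg_right ((le_abs_self x).trans hx) (sq_nonneg x)
    linarith [sin_ge_sub_cube hx0]
  · nlinarith [le_sin hx0.le, (abs_nonneg x).trans hx, sq_nonneg x]

end Real

lemma sub_mul_le_exp_neg_mul {c s r v w : ℝ} (hs : s ≤ 1) (hr : 0 ≤ r) (hrc : 2 * r ≤ c)
    (hw : 0 ≤ w) (hwv : w ≤ v) :
    c - (3 / 8 * c - r / 6 * s) * v ≤ exp (-(w / 4)) * c := by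
  have hcoef : c / 4 ≤ 3 / 8 * c - r / 6 * s := by
    rcases le_or_gt 0 s with hs0 | hs0 <;> nlinarith
  calc c - (3 / 8 * c - r / 6 * s) * v ≤ c - c / 4 * w := by nlinarith
    _ = (-(w / 4) + 1) * c := by ring
    _ ≤ exp (-(w / 4)) * c := by gcongr; linarith; exact add_one_le_exp _

namespace MeasureTheory

variable {Ω : Type*} {m m₀ : MeasurableSpace Ω} {μ : Measure[m₀] Ω}

lemma condExp_div_const (f : Ω → ℝ) (c : ℝ) :
    μ[fun ω => f ω / c | m] =ᵐ[μ] fun ω => μ[f | m] ω / c := by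
  simp_rw [div_eq_inv_mul]
  exact condExp_smul c⁻¹ f m

lemma condExp_sub_const_mul {f g : Ω → ℝ} (hf : Integrable f μ) (hg : Integrable g μ) (c : ℝ) :
    μ[fun ω => f ω - c * g ω | m] =ᵐ[μ] fun ω => μ[f | m] ω - c * μ[g | m] ω :=
  (condExp_sub hf (hg.const_mul c) m).trans (Filter.EventuallyEq.rfl.sub (condExp_smul c g m))

lemma Submartingale.condExp_sub_div_nonneg {𝓕 : Filtration ℕ m₀} {f : ℕ → Ω → ℝ}
    (hf : Submartingale f 𝓕 μ) {i j : ℕ} (hij : i ≤ j) {c : ℝ} (hc : 0 ≤ c) :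
    0 ≤ᵐ[μ] μ[fun ω => (f j ω - f i ω) / c | 𝓕 i] := by
  filter_upwards [condExp_div_const (μ := μ) (m := 𝓕 i) (f j - f i) c,
    hf.condExp_sub_nonneg hij] with ω hω hnn
  exact hω ▸ div_nonneg hnn hc

variable [IsFiniteMeasure μ] {h : Ω → ℝ} {r : ℝ}

lemma Integrable.of_abs_le {f : Ω → ℝ} (hf : AEStronglyMeasurable f μ) {C : ℝ}
    (hC : ∀ ω, |f ω| ≤ C) : Integrable f μ :=
  .of_bound hf C (ae_of_all _ hC)

lemma condExp_cos_le (hm : m ≤ m₀) (hh : AEStronglyMeasurable h μ) (hh1 : ∀ ω, |h ω| ≤ 1) :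
    μ[fun ω => cos (h ω) | m] ≤ᵐ[μ] fun ω => 1 - 3 / 8 * μ[fun ω => h ω ^ 2 | m] ω := by
  have hsq : Integrable (fun ω => h ω ^ 2) μ := .of_abs_le (hh.pow 2) (C := 1) fun ω => by
    rw [abs_pow]; exact pow_le_one₀ (abs_nonneg _) (hh1 ω)
  refine (condExp_mono (g := fun ω => 1 - 3 / 8 * h ω ^ 2)
    (.of_abs_le (continuous_cos.comp_aestronglyMeasurable hh) fun _ => abs_cos_le_one _)
    ((integrable_const 1).sub (hsq.const_mul _))
    (ae_of_all _ fun ω => cos_le_one_sub_mul_sq_of_abs_le_one (hh1 ω))).trans ?_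
  have := condExp_sub_const_mul (m := m) (integrable_const (1 : ℝ)) hsq (3 / 8)
  rw [condExp_const hm] at this
  exact this.le

lemma sub_condExp_mul_le_condExp_sin (hh : AEStronglyMeasurable h μ) (hhr : ∀ ω, |h ω| ≤ r) :
    (fun ω => μ[h | m] ω - r / 6 * μ[fun ω => h ω ^ 2 | m] ω) ≤ᵐ[μ]
      μ[fun ω => sin (h ω) | m] := by
  have hint : Integrable h μ := .of_abs_le hh hhr
  have hsq : Integrable (fun ω => h ω ^ 2) μ := .of_abs_le (hh.pow 2) (C := r ^ 2) fun ω => by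
    rw [abs_pow]; exact pow_le_pow_left₀ (abs_nonneg _) (hhr ω) 2
  refine (condExp_sub_const_mul hint hsq (r / 6)).symm.le.trans (condExp_mono
    (hint.sub (hsq.const_mul _))
    (.of_abs_le (continuous_sin.comp_aestronglyMeasurable hh) fun _ => abs_sin_le_one _)
    (ae_of_all _ fun ω => sub_mul_sq_le_sin (hhr ω)))

lemma condExp_cos_add_le (hm : m ≤ m₀) {θ : Ω → ℝ} (hθ : StronglyMeasurable[m] θ)
    (hh : AEStronglyMeasurable h μ) (hhr : ∀ ω, |h ω| ≤ r) (hr : r ≤ 1)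
    (hdrift : 0 ≤ᵐ[μ] μ[h | m]) :
    ∀ᵐ ω ∂μ, 0 ≤ cos (θ ω) → 0 ≤ sin (θ ω) →
      μ[fun ω => cos (θ ω + h ω) | m] ω ≤
        cos (θ ω) - (3 / 8 * cos (θ ω) - r / 6 * sin (θ ω)) * μ[fun ω => h ω ^ 2 | m] ω := by
  have hcos : Integrable (fun ω => cos (h ω)) μ :=
    .of_abs_le (continuous_cos.comp_aestronglyMeasurable hh) fun _ => abs_cos_le_one _
  have hsin : Integrable (fun ω => sin (h ω)) μ :=
    .of_abs_le (continuous_sin.comp_aestronglyMeasurable hh) fun _ => abs_sin_le_one _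
  have hcos_mul : Integrable ((fun ω => cos (θ ω)) * fun ω => cos (h ω)) μ :=
    hcos.bdd_mul ((continuous_cos.comp_stronglyMeasurable hθ).mono hm).aestronglyMeasurable
      (ae_of_all _ fun ω => (norm_eq_abs _).trans_le (abs_cos_le_one _))
  have hsin_mul : Integrable ((fun ω => sin (θ ω)) * fun ω => sin (h ω)) μ :=
    hsin.bdd_mul ((continuous_sin.comp_stronglyMeasurable hθ).mono hm).aestronglyMeasurable
      (ae_of_all _ fun ω => (norm_eq_abs _).trans_le (abs_sin_le_one _))
  have hexpand : μ[fun ω => cos (θ ω + h ω) | m] =ᵐ[μ]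
      (fun ω => cos (θ ω)) * μ[fun ω => cos (h ω) | m] -
        (fun ω => sin (θ ω)) * μ[fun ω => sin (h ω) | m] := by
    simp_rw [cos_add]
    exact (condExp_sub hcos_mul hsin_mul m).trans <|
      (condExp_mul_of_stronglyMeasurable_left (continuous_cos.comp_stronglyMeasurable hθ)
        hcos_mul hcos).sub
      (condExp_mul_of_stronglyMeasurable_left (continuous_sin.comp_stronglyMeasurable hθ)
        hsin_mul hsin)
  filter_upwards [hexpand, condExp_cos_le hm hh fun ω => (hhr ω).trans hr,
    sub_condExp_mul_le_condExp_sin hh hhr, hdrift] with ω hω hcos_le hsin_ge hdrift_ω hc hs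
  rw [hω, Pi.sub_apply, Pi.mul_apply, Pi.mul_apply]
  generalize μ[fun ω => h ω ^ 2 | m] ω = V at *
  generalize μ[h | m] ω = d at *
  nlinarith [mul_le_mul_of_nonneg_left hcos_le hc, mul_le_mul_of_nonneg_left hsin_ge hs,
    mul_nonneg hs hdrift_ω]

end MeasureTheory

theorem stmt2_general {Ω : Type*} {m : MeasurableSpace Ω} {μ : Measure Ω} [IsProbabilityMeasure μ]
    (𝓕 : Filtration ℕ m) (M : ℕ → Ω → ℝ) (δ mb a ε : ℝ) (hδ : 0 < δ) (hmb : 0 < mb)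
    (hsub : Submartingale M 𝓕 μ)
    (hbdd : ∀ k ω, |M (k + 1) ω - M k ω| ≤ mb)
    (hvar : ∀ k, ∀ᵐ ω ∂μ, δ ≤ (μ[fun ω' => (M (k + 1) ω' - M k ω') ^ 2 | 𝓕 k]) ω)
    (hε : 0 < ε)
    (hg : ∀ u ∈ Set.Icc (-a) a,
      deriv (fun v : ℝ => Real.cos (π / 4 + v)) u ≤ 0 ∧ ε ≤ Real.cos (π / 4 + u)) :
    ∃ y0 : ℝ, 0 < y0 ∧ ∀ y : ℝ, y0 ≤ y → ∀ k : ℕ, ∀ᵐ ω ∂μ,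
      |M k ω / (2 * y)| ≤ a →
      (μ[fun ω' => Real.cos (π / 4 + M (k + 1) ω' / (2 * y)) | 𝓕 k]) ω ≤
        Real.exp (-(δ / 16) / y ^ 2) * Real.cos (π / 4 + M k ω / (2 * y)) := by
  refine ⟨mb / min ε 1, by positivity, fun y hy k => ?_⟩
  have hy2 : 0 < 2 * y := by linarith [(by positivity : 0 < mb / min ε 1)]
  set r := mb / (2 * y)
  have hr : 2 * r ≤ min ε 1 := by
    rw [div_le_iff₀ (lt_min hε one_pos)] at hy
    calc 2 * r = mb / y := by simp only [r]; field_simp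
      _ ≤ min ε 1 := by rw [div_le_iff₀ (by linarith)]; linarith
  set θ : Ω → ℝ := fun ω => π / 4 + M k ω / (2 * y)
  set h : Ω → ℝ := fun ω => (M (k + 1) ω - M k ω) / (2 * y)
  have hθ : StronglyMeasurable[𝓕 k] θ :=
    (continuous_const.add (continuous_id.div_const _)).comp_stronglyMeasurable
      (hsub.stronglyAdapted k)
  have hh : AEStronglyMeasurable h μ :=
    (((hsub.integrable _).sub (hsub.integrable _)).div_const _).aestronglyMeasurable
  have hhr : ∀ ω, |h ω| ≤ r := fun ω => by
    simp only [h, r, abs_div, abs_of_pos hy2]; gcongr; exact hbdd k ω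
  have hvar' : ∀ᵐ ω ∂μ, δ / (2 * y) ^ 2 ≤ μ[fun ω => h ω ^ 2 | 𝓕 k] ω := by
    simp only [h, div_pow]
    filter_upwards [condExp_div_const (μ := μ) (m := 𝓕 k) (fun ω => (M (k + 1) ω - M k ω) ^ 2)
      ((2 * y) ^ 2), hvar k] with ω hω hδω
    rw [hω]; gcongr
  have hθh : (fun ω => cos (π / 4 + M (k + 1) ω / (2 * y))) = fun ω => cos (θ ω + h ω) := by
    funext ω; congr 1; simp only [θ, h]; ring
  filter_upwards [condExp_cos_add_le (𝓕.le k) hθ hh hhr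
    (by linarith [min_le_right ε 1]) (hsub.condExp_sub_div_nonneg k.le_succ hy2.le), hvar']
    with ω hstep hVω hx
  obtain ⟨hderiv, hεcos⟩ := hg _ (abs_le.1 hx)
  have hsin : 0 ≤ sin (θ ω) := by
    have : deriv (fun v : ℝ => cos (π / 4 + v)) (M k ω / (2 * y)) = - sin (θ ω) := by
      rw [deriv_comp_const_add, Real.deriv_cos]
    linarith
  have hexp : -(δ / 16) / y ^ 2 = -(δ / (2 * y) ^ 2 / 4) := by ring
  rw [hθh, hexp]
  exact (hstep (hε.le.trans hεcos) hsin).trans <| sub_mul_le_exp_neg_mul (sin_le_one _)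
    (by positivity) (hr.trans ((min_le_left _ _).trans hεcos)) (by positivity) hVω

theorem stmt2 {Ω : Type*} {m : MeasurableSpace Ω} {μ : Measure Ω} [IsProbabilityMeasure μ]
    (𝓕 : Filtration ℕ m) (M : ℕ → Ω → ℝ) (δ mb a ε : ℝ) (hδ : 0 < δ) (hmb : 0 < mb)
    (hsub : Submartingale M 𝓕 μ) (h0 : ∀ ω, M 0 ω = 0)
    (hbdd : ∀ k ω, |M (k + 1) ω - M k ω| ≤ mb)
    (hvar : ∀ k, ∀ᵐ ω ∂μ, δ ≤ (μ[fun ω' => (M (k + 1) ω' - M k ω') ^ 2 | 𝓕 k]) ω)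
    (ha : 1 / 2 < a) (ha' : a < π / 4) (hε : 0 < ε)
    (hg : ∀ u ∈ Set.Icc (-a) a,
      deriv (fun v : ℝ => Real.cos (π / 4 + v)) u ≤ 0 ∧ ε ≤ Real.cos (π / 4 + u)) :
    ∃ y0 : ℝ, 0 < y0 ∧ ∀ y : ℝ, y0 ≤ y → ∀ k : ℕ, ∀ᵐ ω ∂μ,
      |M k ω / (2 * y)| ≤ a →
      (μ[fun ω' => Real.cos (π / 4 + M (k + 1) ω' / (2 * y)) | 𝓕 k]) ω ≤
        Real.exp (-(δ / 16) / y ^ 2) * Real.cos (π / 4 + M k ω / (2 * y)) :=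
  stmt2_general 𝓕 M δ mb a ε hδ hmb hsub hbdd hvar hε hg
end
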